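/- Let p, q be distinct nonlogical atoms. Then CL1 proves ((p⊓q)∧(p⊓q)) → (p⊓q), but CL1 does not prove (p⊓q) → ((p⊓q)∧(p⊓q)). -/
import Mathlib


namespace CoL

/-- CL1-formulas: built from the logical atoms ⊤, ⊥ and nonlogical atoms by
¬, ∧, ∨, ⊓ (`cand`), ⊔ (`cor`).  `F → G` abbreviates `(¬F) ∨ G`. -/
inductive PF : Type
  | top : PF
  | bot : PF
  | atom (n : ℕ) : PF
  | neg (f : PF) : PF
  | and (f g : PF) : PF
  | or (f g : PF) : PF
  | cand (f g : PF) : PF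
  | cor (f g : PF) : PF
deriving DecidableEq

/-- `F → G` abbreviates `(¬F) ∨ G`. -/
def PF.imp (f g : PF) : PF := .or (.neg f) g

/-- Classical evaluation of a formula under an assignment of truth values to the
nonlogical atoms (the clauses for ⊓, ⊔ are irrelevant junk: they are only ever
used on elementary formulas). -/
def PF.eval (v : ℕ → Bool) : PF → Bool
  | .top => true
  | .bot => false
  | .atom n => v n
  | .neg f => !f.eval v
  | .and f g => f.eval v && g.eval v
  | .or f g => f.eval v || g.eval v
  | .cand _ _ => false
  | .cor _ _ => false

/-- Classical tautology: true under every assignment. -/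
def PF.Taut (f : PF) : Prop := ∀ v : ℕ → Bool, f.eval v = true

/-- The elementarization of a CL1-formula: every surface occurrence of `G⊓H` is
replaced by ⊤ and every surface occurrence of `G⊔H` by ⊥. -/
def PF.elem : PF → PF
  | .top => .top
  | .bot => .bot
  | .atom n => .atom n
  | .neg f => .neg f.elem
  | .and f g => .and f.elem g.elem
  | .or f g => .or f.elem g.elem
  | .cand _ _ => .top
  | .cor _ _ => .bot

/-- A CL1-formula is stable iff its elementarization is a classical tautology. -/
def PF.Stable (f : PF) : Prop := f.elem.Taut

/-- `RuleAPrem pol F H`: `H` is the result of replacing in `F` one surface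
occurrence of a subformula `G₁⊓G₂` occurring positively (resp. of `G₁⊔G₂`
occurring negatively) by `G_i`; `pol` is the polarity of the context (`true` =
positive). -/
inductive RuleAPrem : Bool → PF → PF → Prop
  | cand1 (g₁ g₂) : RuleAPrem true (.cand g₁ g₂) g₁
  | cand2 (g₁ g₂) : RuleAPrem true (.cand g₁ g₂) g₂
  | cor1 (g₁ g₂) : RuleAPrem false (.cor g₁ g₂) g₁
  | cor2 (g₁ g₂) : RuleAPrem false (.cor g₁ g₂) g₂
  | negc {pol f h} : RuleAPrem (!pol) f h → RuleAPrem pol (.neg f) (.neg h)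
  | andl {pol f h} (g) : RuleAPrem pol f h → RuleAPrem pol (.and f g) (.and h g)
  | andr {pol f h} (g) : RuleAPrem pol f h → RuleAPrem pol (.and g f) (.and g h)
  | orl {pol f h} (g) : RuleAPrem pol f h → RuleAPrem pol (.or f g) (.or h g)
  | orr {pol f h} (g) : RuleAPrem pol f h → RuleAPrem pol (.or g f) (.or g h)

/-- `RuleBPrem pol F H`: `H` is the result of replacing in `F` one surface
occurrence of a subformula `G₁⊓G₂` occurring negatively (resp. of `G₁⊔G₂`
occurring positively) by `G_i`. -/
inductive RuleBPrem : Bool → PF → PF → Prop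
  | cand1 (g₁ g₂) : RuleBPrem false (.cand g₁ g₂) g₁
  | cand2 (g₁ g₂) : RuleBPrem false (.cand g₁ g₂) g₂
  | cor1 (g₁ g₂) : RuleBPrem true (.cor g₁ g₂) g₁
  | cor2 (g₁ g₂) : RuleBPrem true (.cor g₁ g₂) g₂
  | negc {pol f h} : RuleBPrem (!pol) f h → RuleBPrem pol (.neg f) (.neg h)
  | andl {pol f h} (g) : RuleBPrem pol f h → RuleBPrem pol (.and f g) (.and h g)
  | andr {pol f h} (g) : RuleBPrem pol f h → RuleBPrem pol (.and g f) (.and g h)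
  | orl {pol f h} (g) : RuleBPrem pol f h → RuleBPrem pol (.or f g) (.or h g)
  | orr {pol f h} (g) : RuleBPrem pol f h → RuleBPrem pol (.or g f) (.or g h)

/-- Provability in CL1: Rule (a) derives a stable `F` from the set of all results
of replacing a positive surface `G₁⊓G₂` (negative surface `G₁⊔G₂`) by `G_i`;
Rule (b) derives `F` from the result of replacing one negative surface `G₁⊓G₂`
(positive surface `G₁⊔G₂`) by `G_i`. -/
inductive CL1Prov : PF → Prop
  | ruleA {f} : f.Stable → (∀ h, RuleAPrem true f h → CL1Prov h) → CL1Prov f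
  | ruleB {f h} : RuleBPrem true f h → CL1Prov h → CL1Prov f

/-! ### Auxiliary development -/

/-- A Rule-(a) replacement always targets a surface `⊓`/`⊔`, so the formula is
not equal to its own elementarization. -/
lemma ruleA_elem_ne {pol f h : _} (hr : RuleAPrem pol f h) : f.elem ≠ f := by
  induction hr with
  | cand1 => simp [PF.elem]
  | cand2 => simp [PF.elem]
  | cor1 => simp [PF.elem]
  | cor2 => simp [PF.elem]
  | negc _ ih => simpa [PF.elem] using ih
  | andl _ _ ih => simp [PF.elem]; exact fun h1 _ => ih h1
  | andr _ _ ih => simp [PF.elem]; exact fun _ h2 => ih h2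
  | orl _ _ ih => simp [PF.elem]; exact fun h1 _ => ih h1
  | orr _ _ ih => simp [PF.elem]; exact fun _ h2 => ih h2

/-- Values for the three choice slots: `U` = still `p⊓q`, `P` = already `p`,
`Q` = already `q`. -/
inductive V3 : Type | U | P | Q

def V3.toPF (p q : ℕ) : V3 → PF
  | .U => .cand (.atom p) (.atom q)
  | .P => .atom p
  | .Q => .atom q

/-- The reachable formulas from `(p⊓q) → ((p⊓q)∧(p⊓q))`. -/
def mk3 (p q : ℕ) (L A B : V3) : PF :=
  .or (.neg (V3.toPF p q L)) (.and (V3.toPF p q A) (V3.toPF p q B))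

/-- Losing positions: the machine wins only if both conjuncts are resolved to
the same atom and the antecedent matches (or is still unresolved). -/
def badV (L A B : V3) : Prop := ¬ (A = B ∧ A ≠ V3.U ∧ (L = A ∨ L = V3.U))

lemma not_bad (p q : ℕ) (hpq : p ≠ q) :
    ∀ F, CL1Prov F → ∀ L A B, F = mk3 p q L A B → badV L A B → False := by
  intro F hF
  induction hF with
  | ruleA hst _ ih =>
      intro L A B hFe hbad
      subst hFe
      cases A <;> cases B <;>
        first
        | (simp [badV] at hbad; done)
        | exact ih _ (.orr _ (.andl _ (.cand1 _ _))) L V3.P V3.U rfl (by simp [badV])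
        | exact ih _ (.orr _ (.andl _ (.cand2 _ _))) L V3.Q V3.P rfl (by simp [badV])
        | exact ih _ (.orr _ (.andl _ (.cand1 _ _))) L V3.P V3.Q rfl (by simp [badV])
        | exact ih _ (.orr _ (.andr _ (.cand2 _ _))) L V3.P V3.Q rfl (by simp [badV])
        | exact ih _ (.orr _ (.andr _ (.cand1 _ _))) L V3.Q V3.P rfl (by simp [badV])
        | (cases L <;>
            first
            | (simp [badV] at hbad; done)
            | simpa [mk3, V3.toPF, PF.Stable, PF.Taut, PF.elem, PF.eval]
                using hst (fun _ => false)
            | simpa [mk3, V3.toPF, PF.Stable, PF.Taut, PF.elem, PF.eval, hpq, Ne.symm hpq]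
                using hst (fun n => decide (n = p))
            | simpa [mk3, V3.toPF, PF.Stable, PF.Taut, PF.elem, PF.eval, hpq, Ne.symm hpq]
                using hst (fun n => decide (n = q)))
  | ruleB hb _ ih =>
      intro L A B hFe hbad
      subst hFe
      simp only [mk3] at hb
      cases hb with
      | orl _ hb' =>
          cases hb' with
          | negc hb'' =>
              cases L
              · simp only [V3.toPF] at hb''
                cases hb'' with
                | cand1 =>
                    exact ih V3.P A B rfl
                      (fun ⟨h1, h2, _⟩ => hbad ⟨h1, h2, Or.inr rfl⟩)
                | cand2 =>
                    exact ih V3.Q A B rfl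
                      (fun ⟨h1, h2, _⟩ => hbad ⟨h1, h2, Or.inr rfl⟩)
              · simp only [V3.toPF] at hb''; cases hb''
              · simp only [V3.toPF] at hb''; cases hb''
      | orr _ hb' =>
          cases hb' with
          | andl _ h3 => cases A <;> simp only [V3.toPF] at h3 <;> cases h3
          | andr _ h3 => cases B <;> simp only [V3.toPF] at h3 <;> cases h3

/-- For distinct nonlogical atoms `p,q`: CL1 proves `((p⊓q)∧(p⊓q)) → (p⊓q)` but
does not prove `(p⊓q) → ((p⊓q)∧(p⊓q))`. -/
theorem cl1_exercise (p q : ℕ) (hpq : p ≠ q) :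
    CL1Prov (PF.imp
      (PF.and (PF.cand (.atom p) (.atom q)) (PF.cand (.atom p) (.atom q)))
      (PF.cand (.atom p) (.atom q))) ∧
    ¬ CL1Prov (PF.imp
      (PF.cand (.atom p) (.atom q))
      (PF.and (PF.cand (.atom p) (.atom q)) (PF.cand (.atom p) (.atom q)))) := by
  constructor
  · -- provability of ((p⊓q)∧(p⊓q)) → (p⊓q)
    refine CL1Prov.ruleA (fun _ => rfl) ?_
    intro h hh
    simp only [PF.imp] at hh
    cases hh with
    | orl _ h1 =>
        cases h1 with
        | negc h2 =>
            cases h2 with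
            | andl _ h3 => cases h3
            | andr _ h3 => cases h3
    | orr _ h1 =>
        cases h1 with
        | cand1 =>
            refine CL1Prov.ruleB (.orl _ (.negc (.andl _ (.cand1 _ _)))) ?_
            refine CL1Prov.ruleB (.orl _ (.negc (.andr _ (.cand1 _ _)))) ?_
            refine CL1Prov.ruleA (fun v => by cases h : v p <;> simp [PF.elem, PF.eval, h]) ?_
            intro h hh
            exact absurd rfl (ruleA_elem_ne hh)
        | cand2 =>
            refine CL1Prov.ruleB (.orl _ (.negc (.andl _ (.cand2 _ _)))) ?_
            refine CL1Prov.ruleB (.orl _ (.negc (.andr _ (.cand2 _ _)))) ?_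
            refine CL1Prov.ruleA (fun v => by cases h : v q <;> simp [PF.elem, PF.eval, h]) ?_
            intro h hh
            exact absurd rfl (ruleA_elem_ne hh)
  · intro hG
    exact not_bad p q hpq _ hG V3.U V3.U V3.U rfl (by simp [badV])

end CoL
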